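/- arXiv:1407.6870 — 2 statements merged into one kernel-verified Lean document; each statement's English description precedes it below -/
import Mathlib

section
/- Let V and W be finite-dimensional real vector spaces, and let C ⊆ V and D ⊆ W be pointed polyhedral cones. A nonzero element w of the tensor product cone C ⊗ D spans an extreme ray of C ⊗ D if and only if w = x ⊗ y for some x spanning an extreme ray of C and some y spanning an extreme ray of D. In particular, every extreme ray of C ⊗ D is the tensor product of an extreme ray of C and an extreme ray of D. -/
open scoped BigOperators TensorProduct

/-- A polyhedral cone: the set of all nonnegative linear combinations of a
finite set of vectors. -/
def IsPolyhedralCone {V : Type*} [AddCommGroup V] [Module ℝ V] (C : Set V) : Prop :=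
  ∃ s : Finset V,
    C = {x | ∃ c : V → ℝ, (∀ v, 0 ≤ c v) ∧ x = ∑ v ∈ s, c v • v}

/-- The tensor product cone of two cones: all nonnegative linear combinations of
elementary tensors `x ⊗ y` with `x ∈ C`, `y ∈ D`. -/
def tensorCone {V W : Type*} [AddCommGroup V] [Module ℝ V] [AddCommGroup W] [Module ℝ W]
    (C : Set V) (D : Set W) : Set (V ⊗[ℝ] W) :=
  {z | ∃ (n : ℕ) (c : Fin n → ℝ) (x : Fin n → V) (y : Fin n → W),
    (∀ i, 0 ≤ c i) ∧ (∀ i, x i ∈ C) ∧ (∀ i, y i ∈ D) ∧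
      z = ∑ i, c i • (x i ⊗ₜ[ℝ] y i)}

/-- A nonzero element `x` of a cone `C` spans an extreme ray of `C` if whenever
`y + z = x` with `y, z ∈ C`, `y` is a nonnegative scalar multiple of `x`. -/
def SpansExtremeRay {V : Type*} [AddCommGroup V] [Module ℝ V] (C : Set V) (x : V) : Prop :=
  x ∈ C ∧ x ≠ 0 ∧ ∀ y ∈ C, ∀ z ∈ C, y + z = x → ∃ t : ℝ, 0 ≤ t ∧ y = t • x

/-!
If `w` spans an extreme ray of `C ⊗ D`, every term of a conic decomposition
`w = ∑ cᵢ • xᵢ ⊗ yᵢ` is a nonnegative multiple of `w`, so `w` is an elementary tensor `x ⊗ y`;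
a splitting of `x` in `C` (or of `y` in `D`) tensors to a splitting of `w`, so `x` and `y` span
extreme rays.

Conversely, extreme rays of a pointed polyhedral cone are exposed: the image of `C` in `V ⧸ ℝx`
is again pointed because `x` is extreme, and a strictly positive functional on it (obtained by
separating `0` from the convex hull of the nonzero generators) pulls back to a functional exposing
`x`. If `f` exposes `x` in `C`, `g` exposes `y` in `D`, and `φ`, `ψ` are strictly positive on
`C`, `D`, then `f ⊗ ψ + φ ⊗ g` is nonnegative on `C ⊗ D` and vanishes on `u ⊗ v` only when
`u ∈ ℝ₊x` and `v ∈ ℝ₊y`, so it exposes `x ⊗ y`.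
-/

open TensorProduct PointedCone

theorem TensorProduct.tmul_eq_zero_iff {K M N : Type*} [Field K] [AddCommGroup M] [Module K M]
    [AddCommGroup N] [Module K N] {m : M} {n : N} : m ⊗ₜ[K] n = 0 ↔ m = 0 ∨ n = 0 := by
  refine ⟨fun h => ?_, by rintro (rfl | rfl) <;> simp⟩
  by_contra! hmn
  obtain ⟨f, hf⟩ := Module.Projective.exists_dual_ne_zero K hmn.1
  obtain ⟨g, hg⟩ := Module.Projective.exists_dual_ne_zero K hmn.2
  have := congrArg (dualDistrib K M N (f ⊗ₜ g)) h
  rw [dualDistrib_apply, map_zero] at this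
  exact mul_ne_zero hf hg this

section

variable {V W : Type*} [AddCommGroup V] [Module ℝ V] [AddCommGroup W] [Module ℝ W]

theorem PointedCone.mem_hull_finset_iff {s : Finset V} {x : V} :
    x ∈ hull ℝ (s : Set V) ↔ ∃ c : V → ℝ, (∀ v, 0 ≤ c v) ∧ x = ∑ v ∈ s, c v • v := by
  constructor
  · rw [Submodule.mem_span_finset]
    rintro ⟨c, -, rfl⟩
    exact ⟨fun v => c v, fun v => (c v).2, rfl⟩
  · rintro ⟨c, hc, rfl⟩
    exact Submodule.sum_mem _ fun v hv => smul_mem _ (hc v) (subset_hull hv)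

theorem PointedCone.mem_hull_singleton {w x : V} :
    x ∈ hull ℝ {w} ↔ ∃ t : ℝ, 0 ≤ t ∧ x = t • w := by
  rw [Submodule.mem_span_singleton]
  exact ⟨fun ⟨t, ht⟩ => ⟨t, t.2, ht.symm⟩, fun ⟨t, ht, hx⟩ => ⟨⟨t, ht⟩, hx.symm⟩⟩

theorem IsPolyhedralCone.exists_fg {C : Set V} (hC : IsPolyhedralCone C) :
    ∃ K : PointedCone ℝ V, K.FG ∧ (K : Set V) = C := by
  obtain ⟨s, rfl⟩ := hC
  exact ⟨hull ℝ s, ⟨s, rfl⟩, Set.ext fun x => mem_hull_finset_iff⟩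

theorem tensorCone_eq_hull (C : Set V) (D : Set W) :
    tensorCone C D = hull ℝ (Set.image2 (· ⊗ₜ[ℝ] ·) C D) := by
  ext z
  simp only [SetLike.mem_coe, Submodule.mem_span_set']
  constructor
  · rintro ⟨n, c, x, y, hc, hx, hy, rfl⟩
    exact ⟨n, fun i => ⟨c i, hc i⟩,
      fun i => ⟨x i ⊗ₜ y i, Set.mem_image2_of_mem (hx i) (hy i)⟩, rfl⟩
  · rintro ⟨n, c, g, rfl⟩
    choose x hx y hy hxy using fun i => (g i).2
    refine ⟨n, fun i => c i, x, y, fun i => (c i).2, hx, hy, ?_⟩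
    simp only [hxy]
    rfl

theorem tensorCone_eq_minTensorProduct (K : PointedCone ℝ V) (L : PointedCone ℝ W) :
    tensorCone (K : Set V) (L : Set W) = (minTensorProduct K L : Set (V ⊗[ℝ] W)) :=
  tensorCone_eq_hull (K : Set V) (L : Set W)

theorem SpansExtremeRay.exists_eq_smul_of_sum_eq {P : PointedCone ℝ V} {w : V}
    (hw : SpansExtremeRay (P : Set V) w) {ι : Type*} [Fintype ι] {f : ι → V}
    (hf : ∀ i, f i ∈ P) (hsum : ∑ i, f i = w) :
    ∃ i, ∃ t : ℝ, 0 ≤ t ∧ w = t • f i := by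
  classical
  obtain ⟨-, hw0, hext⟩ := hw
  have hray : ∀ i, ∃ t : ℝ, 0 ≤ t ∧ f i = t • w := fun i =>
    hext _ (hf i) _ (P.sum_mem fun j _ => hf j)
      (by rw [Finset.add_sum_erase _ _ (Finset.mem_univ i), hsum])
  choose t ht hft using hray
  obtain ⟨i, hi⟩ : ∃ i, t i ≠ 0 := by
    by_contra! h
    exact hw0 (by rw [← hsum]; simp [hft, h])
  refine ⟨i, (t i)⁻¹, inv_nonneg.mpr (ht i), ?_⟩
  rw [hft, smul_smul, inv_mul_cancel₀ hi, one_smul]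

theorem SpansExtremeRay.exists_eq_smul_of_hull {S : Set V} {w : V}
    (hw : SpansExtremeRay (hull ℝ S : Set V) w) :
    ∃ s ∈ S, ∃ t : ℝ, 0 ≤ t ∧ w = t • s := by
  obtain ⟨n, c, g, hsum⟩ := Submodule.mem_span_set'.mp hw.1
  obtain ⟨i, t, ht, rfl⟩ := hw.exists_eq_smul_of_sum_eq
    (fun i => smul_mem _ (c i).2 (subset_hull (g i).2)) hsum
  exact ⟨g i, (g i).2, t * c i, mul_nonneg ht (c i).2, by rw [mul_smul]⟩

theorem exists_forall_pos_of_zero_notMem_convexHull [FiniteDimensional ℝ V] {t : Set V}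
    (ht : t.Finite) (h0 : (0 : V) ∉ convexHull ℝ t) :
    ∃ φ : V →ₗ[ℝ] ℝ, ∀ v ∈ t, 0 < φ v := by
  let e := (Module.finBasis ℝ V).equivFun
  have he0 : (0 : Fin _ → ℝ) ∉ convexHull ℝ (e.toLinearMap '' t) := by
    rw [← LinearMap.image_convexHull]
    rintro ⟨v, hv, hv0⟩
    rw [LinearEquiv.coe_coe, e.map_eq_zero_iff] at hv0
    exact h0 (hv0 ▸ hv)
  obtain ⟨f, u, hf0, hfu⟩ := geometric_hahn_banach_point_closed (convex_convexHull ℝ _)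
    ((ht.image _).isClosed_convexHull ℝ) he0
  refine ⟨(f : (Fin _ → ℝ) →ₗ[ℝ] ℝ) ∘ₗ e.toLinearMap, fun v hv => ?_⟩
  have := hfu (e v) (subset_convexHull ℝ _ (Set.mem_image_of_mem e hv))
  rw [map_zero] at hf0
  simpa using hf0.trans this

theorem PointedCone.FG.exists_strictlyPositive_of_salient [FiniteDimensional ℝ V]
    {K : PointedCone ℝ V} (hK : K.FG) (hsal : (K : ConvexCone ℝ V).Salient) :
    ∃ φ : V →ₗ[ℝ] ℝ, ∀ x ∈ K, 0 ≤ φ x ∧ (φ x = 0 → x = 0) := by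
  classical
  obtain ⟨s, rfl⟩ := hK
  have h0 : (0 : V) ∉ convexHull ℝ ({v ∈ s | v ≠ 0} : Finset V) := by
    rw [Finset.mem_convexHull']
    rintro ⟨c, hc, hc1, hsum⟩
    obtain ⟨v, hv, hcv⟩ : ∃ v ∈ {v ∈ s | v ≠ 0}, 0 < c v := by
      by_contra! h
      rw [Finset.sum_eq_zero fun v hv => le_antisymm (h v hv) (hc v hv)] at hc1
      exact zero_ne_one hc1
    rw [← Finset.add_sum_erase _ _ hv, add_eq_zero_iff_eq_neg'] at hsum
    refine hsal (c v • v) (smul_mem _ hcv.le (subset_hull (Finset.mem_filter.mp hv).1))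
      (smul_ne_zero hcv.ne' (Finset.mem_filter.mp hv).2) ?_
    rw [← hsum]
    exact Submodule.sum_mem _ fun u hu => smul_mem _ (hc u (Finset.mem_of_mem_erase hu))
      (subset_hull (Finset.mem_filter.mp (Finset.mem_of_mem_erase hu)).1)
  obtain ⟨φ, hφ⟩ := exists_forall_pos_of_zero_notMem_convexHull (Finset.finite_toSet _) h0
  refine ⟨φ, fun x hx => ?_⟩
  obtain ⟨c, hc, rfl⟩ := mem_hull_finset_iff.mp hx
  have hφs : ∀ v ∈ s, v ≠ 0 → 0 < φ v := fun v hv hv0 => hφ v (by simp [hv, hv0])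
  have hterm : ∀ v ∈ s, 0 ≤ c v * φ v := fun v hv => by
    rcases eq_or_ne v 0 with rfl | hv0
    · simp
    · exact mul_nonneg (hc v) (hφs v hv hv0).le
  simp only [map_sum, map_smul, smul_eq_mul]
  refine ⟨Finset.sum_nonneg hterm, fun hφx => ?_⟩
  by_contra hx0
  obtain ⟨v, hv, hcv⟩ := Finset.exists_ne_zero_of_sum_ne_zero hx0
  obtain ⟨hcv0, hv0⟩ := smul_ne_zero_iff.mp hcv
  refine (mul_pos ((hc v).lt_of_ne' hcv0) (hφs v hv hv0)).not_ge ?_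
  exact hφx ▸ Finset.single_le_sum hterm hv

def ExposesRay (P : Set V) (w : V) (h : V →ₗ[ℝ] ℝ) : Prop :=
  h w = 0 ∧ (∀ z ∈ P, 0 ≤ h z) ∧ ∀ z ∈ P, h z = 0 → ∃ t : ℝ, 0 ≤ t ∧ z = t • w

theorem SpansExtremeRay.exists_nonneg_smul_of_add_eq_smul {K : PointedCone ℝ V}
    (hsal : (K : ConvexCone ℝ V).Salient) {x : V} (hx : SpansExtremeRay (K : Set V) x)
    {a b : V} (ha : a ∈ K) (hb : b ∈ K) {t : ℝ} (hab : a + b = t • x) :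
    ∃ r : ℝ, 0 ≤ r ∧ a = r • x := by
  obtain ⟨hxK, -, hext⟩ := hx
  rcases lt_or_ge 0 t with ht | ht
  · have hsc : 0 ≤ t⁻¹ := inv_nonneg.mpr ht.le
    obtain ⟨r, hr, har⟩ := hext _ (K.smul_mem hsc ha) _ (K.smul_mem hsc hb)
      (by rw [← smul_add, hab, smul_smul, inv_mul_cancel₀ ht.ne', one_smul])
    refine ⟨t * r, mul_nonneg ht.le hr, ?_⟩
    rw [mul_smul, ← har, smul_smul, mul_inv_cancel₀ ht.ne', one_smul]
  · have hab0 : a + b = 0 := by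
      by_contra h
      refine hsal _ (K.add_mem ha hb) h ?_
      rw [hab, ← neg_smul]
      exact K.smul_mem (neg_nonneg.mpr ht) hxK
    have ha0 : a = 0 := by
      by_contra h
      exact hsal _ ha h (by rwa [neg_eq_of_add_eq_zero_right hab0])
    exact ⟨0, le_rfl, by rw [ha0, zero_smul]⟩

theorem SpansExtremeRay.exists_exposesRay [FiniteDimensional ℝ V] {K : PointedCone ℝ V}
    (hK : K.FG) (hsal : (K : ConvexCone ℝ V).Salient) {x : V}
    (hx : SpansExtremeRay (K : Set V) x) : ∃ f : V →ₗ[ℝ] ℝ, ExposesRay (K : Set V) x f := by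
  let π := (ℝ ∙ x).mkQ
  have hπx : π x = 0 := (Submodule.Quotient.mk_eq_zero _).mpr (Submodule.mem_span_singleton_self x)
  have hker : ∀ a ∈ K, ∀ b ∈ K, π (a + b) = 0 → ∃ t : ℝ, 0 ≤ t ∧ a = t • x := by
    intro a ha b hb h0
    obtain ⟨t, ht⟩ := Submodule.mem_span_singleton.mp ((Submodule.Quotient.mk_eq_zero _).mp h0)
    exact hx.exists_nonneg_smul_of_add_eq_smul hsal ha hb ht.symm
  have hsal' : (K.map π : ConvexCone ℝ (V ⧸ ℝ ∙ x)).Salient := by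
    rintro _ ⟨a, ha, rfl⟩ hne hneg
    obtain ⟨b, hb, hba⟩ := PointedCone.mem_map.mp hneg
    obtain ⟨r, -, rfl⟩ := hker a ha b hb (by rw [map_add, hba]; simp)
    exact hne (by simp [π])
  obtain ⟨φ, hφ⟩ := FG.exists_strictlyPositive_of_salient (hK.map _) hsal'
  have hφπ : ∀ a ∈ K, 0 ≤ φ (π a) ∧ (φ (π a) = 0 → π a = 0) := fun a ha =>
    hφ _ (PointedCone.mem_map.mpr ⟨a, ha, rfl⟩)
  refine ⟨φ ∘ₗ π, by simp [hπx], fun a ha => (hφπ a ha).1, fun a ha hfa => ?_⟩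
  exact hker a ha 0 K.zero_mem (by rw [add_zero]; exact (hφπ a ha).2 hfa)

theorem ExposesRay.spansExtremeRay {P : Set V} {w : V} {h : V →ₗ[ℝ] ℝ} (hh : ExposesRay P w h)
    (hwP : w ∈ P) (hw0 : w ≠ 0) : SpansExtremeRay P w := by
  obtain ⟨hw, hP, hzero⟩ := hh
  refine ⟨hwP, hw0, fun a ha b hb hab => hzero a ha ?_⟩
  have : h a + h b = 0 := by rw [← map_add, hab, hw]
  linarith [hP a ha, hP b hb]

theorem PointedCone.apply_nonneg_and_mem_of_mem_hull {S : Set V} {h : V →ₗ[ℝ] ℝ}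
    {Q : PointedCone ℝ V} (hS : ∀ s ∈ S, 0 ≤ h s ∧ (h s = 0 → s ∈ Q)) {z : V}
    (hz : z ∈ hull ℝ S) : 0 ≤ h z ∧ (h z = 0 → z ∈ Q) := by
  induction hz using Submodule.span_induction with
  | mem s hs => exact hS s hs
  | zero => exact ⟨by rw [map_zero], fun _ => Q.zero_mem⟩
  | add a b _ _ ha hb =>
    rw [map_add, add_eq_zero_iff_of_nonneg ha.1 hb.1]
    exact ⟨add_nonneg ha.1 hb.1, fun h0 => Q.add_mem (ha.2 h0.1) (hb.2 h0.2)⟩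
  | smul c a _ ha =>
    rw [← Nonneg.coe_smul, map_smul, smul_eq_mul, mul_eq_zero]
    refine ⟨mul_nonneg c.2 ha.1, ?_⟩
    rintro (hc | h0)
    · simp [hc]
    · exact Q.smul_mem c.2 (ha.2 h0)

variable {K : PointedCone ℝ V} {L : PointedCone ℝ W}

theorem SpansExtremeRay.of_tmul_left {x : V} {y : W}
    (h : SpansExtremeRay (minTensorProduct K L : Set (V ⊗[ℝ] W)) (x ⊗ₜ[ℝ] y)) (hx : x ∈ K)
    (hy : y ∈ L) : SpansExtremeRay (K : Set V) x := by
  obtain ⟨-, h0, hext⟩ := h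
  obtain ⟨hx0, hy0⟩ := not_or.mp (tmul_eq_zero_iff.not.mp h0)
  refine ⟨hx, hx0, fun a ha b hb hab => ?_⟩
  obtain ⟨t, ht, hat⟩ := hext _ (tmul_mem_minTensorProduct ha hy) _
    (tmul_mem_minTensorProduct hb hy) (by rw [← add_tmul, hab])
  have : (a - t • x) ⊗ₜ[ℝ] y = 0 := by rw [sub_tmul, hat, smul_tmul', sub_self]
  exact ⟨t, ht, sub_eq_zero.mp ((tmul_eq_zero_iff.mp this).resolve_right hy0)⟩

theorem SpansExtremeRay.of_tmul_right {x : V} {y : W}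
    (h : SpansExtremeRay (minTensorProduct K L : Set (V ⊗[ℝ] W)) (x ⊗ₜ[ℝ] y)) (hx : x ∈ K)
    (hy : y ∈ L) : SpansExtremeRay (L : Set W) y := by
  obtain ⟨-, h0, hext⟩ := h
  obtain ⟨hx0, hy0⟩ := not_or.mp (tmul_eq_zero_iff.not.mp h0)
  refine ⟨hy, hy0, fun a ha b hb hab => ?_⟩
  obtain ⟨t, ht, hat⟩ := hext _ (tmul_mem_minTensorProduct hx ha) _
    (tmul_mem_minTensorProduct hx hb) (by rw [← tmul_add, hab])
  have : x ⊗ₜ[ℝ] (a - t • y) = 0 := by rw [tmul_sub, hat, tmul_smul, sub_self]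
  exact ⟨t, ht, sub_eq_zero.mp ((tmul_eq_zero_iff.mp this).resolve_left hx0)⟩

theorem SpansExtremeRay.exists_eq_tmul {w : V ⊗[ℝ] W}
    (hw : SpansExtremeRay (minTensorProduct K L : Set (V ⊗[ℝ] W)) w) :
    ∃ (x : V) (y : W), SpansExtremeRay (K : Set V) x ∧ SpansExtremeRay (L : Set W) y ∧
      w = x ⊗ₜ[ℝ] y := by
  obtain ⟨_, ⟨x, hx, y, hy, rfl⟩, t, ht, rfl⟩ := hw.exists_eq_smul_of_hull
  have htx : t • x ∈ K := K.smul_mem ht hx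
  replace hw : SpansExtremeRay (minTensorProduct K L : Set (V ⊗[ℝ] W)) ((t • x) ⊗ₜ y) := by
    rwa [← smul_tmul']
  exact ⟨t • x, y, hw.of_tmul_left htx hy, hw.of_tmul_right htx hy, smul_tmul' t x y⟩

theorem ExposesRay.tmul {x : V} {y : W} {f φ : V →ₗ[ℝ] ℝ} {g ψ : W →ₗ[ℝ] ℝ}
    (hf : ExposesRay (K : Set V) x f) (hg : ExposesRay (L : Set W) y g)
    (hφ : ∀ u ∈ K, 0 ≤ φ u ∧ (φ u = 0 → u = 0)) (hψ : ∀ v ∈ L, 0 ≤ ψ v ∧ (ψ v = 0 → v = 0)) :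
    ExposesRay (minTensorProduct K L : Set (V ⊗[ℝ] W)) (x ⊗ₜ y)
      (dualDistrib ℝ V W (f ⊗ₜ ψ + φ ⊗ₜ g)) := by
  obtain ⟨hfx, hf0, hf⟩ := hf
  obtain ⟨hgy, hg0, hg⟩ := hg
  set h := dualDistrib ℝ V W (f ⊗ₜ ψ + φ ⊗ₜ g)
  have hh : ∀ u v, h (u ⊗ₜ v) = f u * ψ v + φ u * g v := fun u v => by
    simp [h, dualDistrib_apply]
  have key : ∀ z ∈ minTensorProduct K L, 0 ≤ h z ∧ (h z = 0 → z ∈ hull ℝ {x ⊗ₜ[ℝ] y}) := by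
    refine fun z hz => apply_nonneg_and_mem_of_mem_hull ?_ hz
    rintro _ ⟨u, hu, v, hv, rfl⟩
    have h1 : 0 ≤ f u * ψ v := mul_nonneg (hf0 u hu) (hψ v hv).1
    have h2 : 0 ≤ φ u * g v := mul_nonneg (hφ u hu).1 (hg0 v hv)
    rw [hh, add_eq_zero_iff_of_nonneg h1 h2]
    refine ⟨add_nonneg h1 h2, fun ⟨hfψ, hφg⟩ => ?_⟩
    rcases eq_or_ne u 0 with rfl | hu0
    · simp
    rcases eq_or_ne v 0 with rfl | hv0
    · simp
    obtain ⟨β, hβ, rfl⟩ := hg v hv ((mul_eq_zero.mp hφg).resolve_left (mt (hφ u hu).2 hu0))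
    obtain ⟨α, hα, rfl⟩ := hf u hu ((mul_eq_zero.mp hfψ).resolve_right (mt (hψ _ hv).2 hv0))
    exact mem_hull_singleton.mpr ⟨α * β, mul_nonneg hα hβ, smul_tmul_smul α β x y⟩
  refine ⟨by rw [hh, hfx, hgy, zero_mul, mul_zero, add_zero], fun z hz => (key z hz).1,
    fun z hz h0 => mem_hull_singleton.mp ((key z hz).2 h0)⟩

theorem SpansExtremeRay.tmul [FiniteDimensional ℝ V] [FiniteDimensional ℝ W] (hK : K.FG)
    (hL : L.FG) (hKsal : (K : ConvexCone ℝ V).Salient) (hLsal : (L : ConvexCone ℝ W).Salient)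
    {x : V} {y : W} (hx : SpansExtremeRay (K : Set V) x) (hy : SpansExtremeRay (L : Set W) y) :
    SpansExtremeRay (minTensorProduct K L : Set (V ⊗[ℝ] W)) (x ⊗ₜ y) := by
  obtain ⟨φ, hφ⟩ := FG.exists_strictlyPositive_of_salient hK hKsal
  obtain ⟨ψ, hψ⟩ := FG.exists_strictlyPositive_of_salient hL hLsal
  obtain ⟨f, hf⟩ := hx.exists_exposesRay hK hKsal
  obtain ⟨g, hg⟩ := hy.exists_exposesRay hL hLsal
  refine (hf.tmul hg hφ hψ).spansExtremeRay (tmul_mem_minTensorProduct hx.1 hy.1) ?_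
  rw [Ne, tmul_eq_zero_iff, not_or]
  exact ⟨hx.2.1, hy.2.1⟩

end

theorem stmt_3_general {V W : Type*}
    [AddCommGroup V] [Module ℝ V] [FiniteDimensional ℝ V]
    [AddCommGroup W] [Module ℝ W] [FiniteDimensional ℝ W]
    (C : Set V) (D : Set W)
    (hC : IsPolyhedralCone C) (hD : IsPolyhedralCone D)
    (hCpointed : C ∩ (-C) = {0}) (hDpointed : D ∩ (-D) = {0})
    (w : V ⊗[ℝ] W) :
    SpansExtremeRay (tensorCone C D) w ↔
      ∃ (x : V) (y : W), SpansExtremeRay C x ∧ SpansExtremeRay D y ∧ w = x ⊗ₜ[ℝ] y := by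
  obtain ⟨K, hK, rfl⟩ := hC.exists_fg
  obtain ⟨L, hL, rfl⟩ := hD.exists_fg
  rw [← salient_iff_inter_neg_eq_singleton] at hCpointed hDpointed
  rw [tensorCone_eq_minTensorProduct]
  refine ⟨SpansExtremeRay.exists_eq_tmul, ?_⟩
  rintro ⟨x, y, hx, hy, rfl⟩
  exact hx.tmul hK hL hCpointed hDpointed hy

theorem stmt_3 {V W : Type*}
    [AddCommGroup V] [Module ℝ V] [FiniteDimensional ℝ V]
    [AddCommGroup W] [Module ℝ W] [FiniteDimensional ℝ W]
    (C : Set V) (D : Set W)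
    (hC : IsPolyhedralCone C) (hD : IsPolyhedralCone D)
    (hCpointed : C ∩ (-C) = {0}) (hDpointed : D ∩ (-D) = {0})
    (w : V ⊗[ℝ] W) (hw : w ∈ tensorCone C D) (hw0 : w ≠ 0) :
    SpansExtremeRay (tensorCone C D) w ↔
      ∃ (x : V) (y : W), SpansExtremeRay C x ∧ SpansExtremeRay D y ∧ w = x ⊗ₜ[ℝ] y :=
  stmt_3_general C D hC hD hCpointed hDpointed w
end

section
/- Let V and W be finite-dimensional real vector spaces and let P ⊆ V and Q ⊆ W be nonempty polytopes. Let C(P) := {a • (x,(1:ℝ)) : a ≥ 0, x ∈ P} ⊆ V × ℝ and C(Q) ⊆ W × ℝ be the cones over P and Q, and let C(P) ⊗ C(Q) ⊆ (V × ℝ) ⊗[ℝ] (W × ℝ) be their tensor product cone. Let φ : (V × ℝ) ⊗[ℝ] (W × ℝ) ≃ₗ[ℝ] ((V ⊗[ℝ] W) × V × W) × ℝ be the linear equivalence determined by φ((v,a) ⊗ (w,b)) = ((v ⊗ w, b • v, a • w), a·b). Then: (i) φ '' (C(P) ⊗ C(Q)) = C(P ⊗ Q), the cone over the tensor product polytope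 P ⊗ Q ⊆ (V ⊗[ℝ] W) × V × W; and (ii) the degree-one slice {z ∈ φ '' (C(P) ⊗ C(Q)) | the last (ℝ-)coordinate of z equals 1} equals (P ⊗ Q) × {1}. -/
open scoped BigOperators TensorProduct

/-- A polytope: the convex hull of a finite set of points. -/
def IsPolytope {V : Type*} [AddCommGroup V] [Module ℝ V] (P : Set V) : Prop :=
  ∃ F : Finset V, P = convexHull ℝ (F : Set V)

/-- The cone over a polytope `P ⊆ V`: the set of nonnegative multiples of
`P × {1}` in `V × ℝ`. -/
def coneOver {V : Type*} [AddCommGroup V] [Module ℝ V] (P : Set V) : Set (V × ℝ) :=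
  {z | ∃ a : ℝ, 0 ≤ a ∧ ∃ x ∈ P, z = a • (x, (1 : ℝ))}

/-- The tensor product of two polytopes `P ⊆ V` and `Q ⊆ W`:
the convex hull of `{(x ⊗ y, x, y) : x a vertex of P, y a vertex of Q}`
in `(V ⊗[ℝ] W) × V × W`. -/
def tensorPolytope {V W : Type*} [AddCommGroup V] [Module ℝ V] [AddCommGroup W] [Module ℝ W]
    (P : Set V) (Q : Set W) : Set ((V ⊗[ℝ] W) × V × W) :=
  convexHull ℝ
    {p | ∃ x ∈ Set.extremePoints ℝ P, ∃ y ∈ Set.extremePoints ℝ Q,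
      p = (x ⊗ₜ[ℝ] y, x, y)}

/-!
Both sets are convex cones, so it suffices to compare generators. `φ` sends a generator
`a (x, 1) ⊗ b (y, 1)` of `C(P) ⊗ C(Q)` to `a b ((x ⊗ y, x, y), 1)`, and since
`(x, y) ↦ (x ⊗ y, x, y)` is affine in each variable separately, Krein–Milman (`P` and `Q` are the
convex hulls of their extreme points) puts `(x ⊗ y, x, y)` in `P ⊗ Q`. Conversely, the generators
`((x ⊗ y, x, y), 1)` of `C(P ⊗ Q)`, with `x`, `y` extreme, are the images of `(x, 1) ⊗ (y, 1)`.
The degree-one slice of a cone `C(T)` is `T × {1}`.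
-/

section Polytope

variable {V : Type*} [AddCommGroup V] [Module ℝ V] {P : Set V}

lemma IsPolytope.image {W : Type*} [AddCommGroup W] [Module ℝ W] (f : V →ₗ[ℝ] W)
    (hP : IsPolytope P) : IsPolytope (f '' P) := by
  classical
  obtain ⟨F, rfl⟩ := hP
  exact ⟨F.image f, by rw [f.image_convexHull, Finset.coe_image]⟩

/-- Krein–Milman, with no closure needed: the extreme points of a polytope lie among its finitely
many spanning points, so their convex hull is closed. -/
lemma IsPolytope.convexHull_extremePoints_of_locallyConvexSpace [TopologicalSpace V] [T2Space V]
    [IsTopologicalAddGroup V] [ContinuousSMul ℝ V] [LocallyConvexSpace ℝ V]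
    (hP : IsPolytope P) : convexHull ℝ (P.extremePoints ℝ) = P := by
  obtain ⟨F, rfl⟩ := hP
  have hfin : (Set.extremePoints ℝ (convexHull ℝ (F : Set V))).Finite :=
    F.finite_toSet.subset extremePoints_convexHull_subset
  simpa only [(hfin.isClosed_convexHull ℝ).closure_eq] using
    closure_convexHull_extremePoints (F.finite_toSet.isCompact_convexHull ℝ) (convex_convexHull ℝ _)

lemma IsPolytope.convexHull_extremePoints [FiniteDimensional ℝ V] (hP : IsPolytope P) :
    convexHull ℝ (P.extremePoints ℝ) = P := by
  let e := (Module.finBasis ℝ V).equivFun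
  have hback : e.symm '' (e '' P) = P := e.toEquiv.symm_image_image P
  have hKM := (hP.image e.toLinearMap).convexHull_extremePoints_of_locallyConvexSpace
  rw [LinearEquiv.coe_coe] at hKM
  conv_lhs => rw [← hback, ← image_extremePoints, ← LinearEquiv.coe_coe,
    ← LinearMap.image_convexHull, LinearEquiv.coe_coe, hKM, hback]

end Polytope

section TensorPolytope

variable {V W : Type*} [AddCommGroup V] [Module ℝ V] [AddCommGroup W] [Module ℝ W]

lemma Convex.setOf_tmul_mem_of_right {T : Set ((V ⊗[ℝ] W) × V × W)} (hT : Convex ℝ T) (y : W) :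
    Convex ℝ {x : V | (x ⊗ₜ[ℝ] y, x, y) ∈ T} := by
  intro x₁ hx₁ x₂ hx₂ a b ha hb hab
  convert hT hx₁ hx₂ ha hb hab using 1
  simp [TensorProduct.add_tmul, TensorProduct.smul_tmul', ← add_smul, hab]

lemma Convex.setOf_tmul_mem_of_left {T : Set ((V ⊗[ℝ] W) × V × W)} (hT : Convex ℝ T) (x : V) :
    Convex ℝ {y : W | (x ⊗ₜ[ℝ] y, x, y) ∈ T} := by
  intro y₁ hy₁ y₂ hy₂ a b ha hb hab
  convert hT hy₁ hy₂ ha hb hab using 1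
  simp [TensorProduct.tmul_add, TensorProduct.tmul_smul, ← add_smul, hab]

lemma tmul_mem_tensorPolytope {P : Set V} {Q : Set W}
    (hP : convexHull ℝ (P.extremePoints ℝ) = P) (hQ : convexHull ℝ (Q.extremePoints ℝ) = Q)
    {x : V} (hx : x ∈ P) {y : W} (hy : y ∈ Q) :
    (x ⊗ₜ[ℝ] y, x, y) ∈ tensorPolytope P Q := by
  have hT : Convex ℝ (tensorPolytope P Q) := convex_convexHull ℝ _
  have hPy : ∀ y ∈ Q.extremePoints ℝ, P ⊆ {x | (x ⊗ₜ[ℝ] y, x, y) ∈ tensorPolytope P Q} :=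
    fun y hy => hP.symm.subset.trans <| convexHull_min
      (fun x hx => subset_convexHull ℝ _ ⟨x, hx, y, hy, rfl⟩) (hT.setOf_tmul_mem_of_right y)
  have hQx : Q ⊆ {y | (x ⊗ₜ[ℝ] y, x, y) ∈ tensorPolytope P Q} :=
    hQ.symm.subset.trans <| convexHull_min (fun y hy => hPy y hy hx) (hT.setOf_tmul_mem_of_left x)
  exact hQx hy

end TensorPolytope

section Cones

variable {V : Type*} [AddCommGroup V] [Module ℝ V]

lemma mk_one_mem_coneOver {T : Set V} {x : V} (hx : x ∈ T) : (x, (1 : ℝ)) ∈ coneOver T :=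
  ⟨1, zero_le_one, x, hx, (one_smul ℝ _).symm⟩

lemma zero_mem_coneOver {T : Set V} (hT : T.Nonempty) : (0 : V × ℝ) ∈ coneOver T :=
  ⟨0, le_rfl, hT.some, hT.some_mem, (zero_smul ℝ _).symm⟩

lemma smul_mem_coneOver {T : Set V} {c : ℝ} (hc : 0 ≤ c) {z : V × ℝ} (hz : z ∈ coneOver T) :
    c • z ∈ coneOver T := by
  obtain ⟨a, ha, x, hx, rfl⟩ := hz
  exact ⟨c * a, mul_nonneg hc ha, x, hx, smul_smul c a _⟩

/-- `a (x, 1) + b (y, 1) = (a + b) (x', 1)` with `x'` the barycentre of `x` and `y` with weights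
`a` and `b`. -/
lemma add_mem_coneOver {T : Set V} (hT : Convex ℝ T) {z z' : V × ℝ}
    (hz : z ∈ coneOver T) (hz' : z' ∈ coneOver T) : z + z' ∈ coneOver T := by
  obtain ⟨a, ha, x, hx, rfl⟩ := hz
  obtain ⟨b, hb, y, hy, rfl⟩ := hz'
  rcases (add_nonneg ha hb).eq_or_lt with hab | hab
  · obtain ⟨rfl, rfl⟩ := (add_eq_zero_iff_of_nonneg ha hb).1 hab.symm
    exact ⟨0, le_rfl, x, hx, by simp⟩
  · refine ⟨a + b, hab.le, (a / (a + b)) • x + (b / (a + b)) • y,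
      hT hx hy (by positivity) (by positivity) (by field_simp), ?_⟩
    ext <;> simp [smul_smul, mul_div_cancel₀ _ hab.ne']

lemma setOf_mem_coneOver_snd_eq_one (T : Set V) :
    {z ∈ coneOver T | z.2 = 1} = T ×ˢ ({1} : Set ℝ) := by
  ext ⟨x, t⟩
  constructor
  · rintro ⟨⟨a, -, y, hy, h⟩, rfl : t = 1⟩
    obtain ⟨rfl, rfl⟩ : x = a • y ∧ 1 = a := by simpa using h
    simpa using hy
  · rintro ⟨hx, rfl : t = 1⟩
    exact ⟨mk_one_mem_coneOver hx, rfl⟩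

end Cones

section TensorCone

variable {V W : Type*} [AddCommGroup V] [Module ℝ V] [AddCommGroup W] [Module ℝ W]
  {C : Set V} {D : Set W}

lemma tmul_mem_tensorCone {x : V} {y : W} (hx : x ∈ C) (hy : y ∈ D) :
    x ⊗ₜ[ℝ] y ∈ tensorCone C D :=
  ⟨1, fun _ => 1, fun _ => x, fun _ => y, fun _ => zero_le_one, fun _ => hx, fun _ => hy,
    by simp⟩

lemma smul_mem_tensorCone {c : ℝ} (hc : 0 ≤ c) {z : V ⊗[ℝ] W} (hz : z ∈ tensorCone C D) :
    c • z ∈ tensorCone C D := by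
  obtain ⟨n, a, x, y, ha, hx, hy, rfl⟩ := hz
  exact ⟨n, fun i => c * a i, x, y, fun i => mul_nonneg hc (ha i), hx, hy,
    by simp only [Finset.smul_sum, smul_smul]⟩

lemma add_mem_tensorCone {z z' : V ⊗[ℝ] W} (hz : z ∈ tensorCone C D)
    (hz' : z' ∈ tensorCone C D) : z + z' ∈ tensorCone C D := by
  obtain ⟨n, a, x, y, ha, hx, hy, rfl⟩ := hz
  obtain ⟨m, b, x', y', hb, hx', hy', rfl⟩ := hz'
  refine ⟨n + m, Fin.append a b, Fin.append x x', Fin.append y y',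
    Fin.addCases (by simpa using ha) (by simpa using hb),
    Fin.addCases (by simpa using hx) (by simpa using hx'),
    Fin.addCases (by simpa using hy) (by simpa using hy'), ?_⟩
  simp [Fin.sum_univ_add]

lemma convex_tensorCone : Convex ℝ (tensorCone C D) :=
  fun _ hz _ hz' _ _ ha hb _ =>
    add_mem_tensorCone (smul_mem_tensorCone ha hz) (smul_mem_tensorCone hb hz')

end TensorCone

section ConeOverTensorPolytope

variable {V W : Type*} [AddCommGroup V] [Module ℝ V] [AddCommGroup W] [Module ℝ W]
  {P : Set V} {Q : Set W} {φ : (V × ℝ) ⊗[ℝ] (W × ℝ) →ₗ[ℝ] ((V ⊗[ℝ] W) × V × W) × ℝ}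

lemma image_tensorCone_coneOver_subset
    (hφ : ∀ (v : V) (a : ℝ) (w : W) (b : ℝ),
      φ ((v, a) ⊗ₜ[ℝ] (w, b)) = ((v ⊗ₜ[ℝ] w, b • v, a • w), a * b))
    (hP : convexHull ℝ (P.extremePoints ℝ) = P) (hQ : convexHull ℝ (Q.extremePoints ℝ) = Q)
    (hPne : P.Nonempty) (hQne : Q.Nonempty) :
    φ '' tensorCone (coneOver P) (coneOver Q) ⊆ coneOver (tensorPolytope P Q) := by
  have hT : Convex ℝ (tensorPolytope P Q) := convex_convexHull ℝ _
  have hTne : (tensorPolytope P Q).Nonempty :=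
    ⟨_, tmul_mem_tensorPolytope hP hQ hPne.some_mem hQne.some_mem⟩
  have hgen : ∀ z ∈ coneOver P, ∀ z' ∈ coneOver Q,
      φ (z ⊗ₜ[ℝ] z') ∈ coneOver (tensorPolytope P Q) := by
    rintro _ ⟨a, ha, x, hx, rfl⟩ _ ⟨b, hb, y, hy, rfl⟩
    rw [TensorProduct.smul_tmul_smul, map_smul, hφ, one_smul, one_smul, one_mul]
    exact smul_mem_coneOver (mul_nonneg ha hb)
      (mk_one_mem_coneOver (tmul_mem_tensorPolytope hP hQ hx hy))
  rintro _ ⟨_, ⟨n, c, x, y, hc, hx, hy, rfl⟩, rfl⟩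
  rw [map_sum]
  exact Finset.sum_induction _ (· ∈ coneOver (tensorPolytope P Q))
    (fun _ _ => add_mem_coneOver hT) (zero_mem_coneOver hTne)
    fun i _ => by rw [map_smul]; exact smul_mem_coneOver (hc i) (hgen _ (hx i) _ (hy i))

lemma coneOver_tensorPolytope_subset_image
    (hφ : ∀ (v : V) (a : ℝ) (w : W) (b : ℝ),
      φ ((v, a) ⊗ₜ[ℝ] (w, b)) = ((v ⊗ₜ[ℝ] w, b • v, a • w), a * b)) :
    coneOver (tensorPolytope P Q) ⊆ φ '' tensorCone (coneOver P) (coneOver Q) := by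
  have hconv : Convex ℝ {u | (u, (1 : ℝ)) ∈ φ '' tensorCone (coneOver P) (coneOver Q)} := by
    intro u hu u' hu' a b ha hb hab
    have h : (a • u + b • u', (1 : ℝ)) = a • (u, (1 : ℝ)) + b • (u', (1 : ℝ)) := by
      ext <;> simp [hab]
    change (a • u + b • u', (1 : ℝ)) ∈ φ '' tensorCone (coneOver P) (coneOver Q)
    rw [h]
    exact (convex_tensorCone.linear_image φ) hu hu' ha hb hab
  have hgen : {p | ∃ x ∈ P.extremePoints ℝ, ∃ y ∈ Q.extremePoints ℝ, p = (x ⊗ₜ[ℝ] y, x, y)} ⊆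
      {u | (u, (1 : ℝ)) ∈ φ '' tensorCone (coneOver P) (coneOver Q)} := by
    rintro _ ⟨x, hx, y, hy, rfl⟩
    refine ⟨_, tmul_mem_tensorCone (mk_one_mem_coneOver (extremePoints_subset hx))
      (mk_one_mem_coneOver (extremePoints_subset hy)), ?_⟩
    simp [hφ]
  rintro _ ⟨s, hs, u, hu, rfl⟩
  obtain ⟨z, hz, hzu⟩ := convexHull_min hgen hconv hu
  exact ⟨s • z, smul_mem_tensorCone hs hz, by rw [map_smul, hzu]⟩

end ConeOverTensorPolytope

theorem stmt_17 {V W : Type*}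
    [AddCommGroup V] [Module ℝ V] [FiniteDimensional ℝ V]
    [AddCommGroup W] [Module ℝ W] [FiniteDimensional ℝ W]
    (P : Set V) (Q : Set W)
    (hP : IsPolytope P) (hPne : P.Nonempty)
    (hQ : IsPolytope Q) (hQne : Q.Nonempty)
    (φ : ((V × ℝ) ⊗[ℝ] (W × ℝ)) ≃ₗ[ℝ] ((V ⊗[ℝ] W) × V × W) × ℝ)
    (hφ : ∀ (v : V) (a : ℝ) (w : W) (b : ℝ),
      φ ((v, a) ⊗ₜ[ℝ] (w, b)) = ((v ⊗ₜ[ℝ] w, b • v, a • w), a * b)) :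
    φ '' tensorCone (coneOver P) (coneOver Q) = coneOver (tensorPolytope P Q) ∧
    {z ∈ φ '' tensorCone (coneOver P) (coneOver Q) | z.2 = 1} =
      (tensorPolytope P Q) ×ˢ ({1} : Set ℝ) := by
  have hcone : φ '' tensorCone (coneOver P) (coneOver Q) = coneOver (tensorPolytope P Q) :=
    (image_tensorCone_coneOver_subset (φ := φ.toLinearMap) hφ hP.convexHull_extremePoints
      hQ.convexHull_extremePoints hPne hQne).antisymm
      (coneOver_tensorPolytope_subset_image (φ := φ.toLinearMap) hφ)
  exact ⟨hcone, hcone ▸ setOf_mem_coneOver_snd_eq_one _⟩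
end
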